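/- Let G be a group with a length function l : G → Z^n (right lexicographic order) that is δ-hyperbolic with ht(δ) = 1. For k ≥ 1 let π_k : Z^n → Z^{n−k} be the projection onto the n−k rightmost coordinates, and set l_k = π_k ∘ l. Then π_k is an order-preserving group homomorphism with π_k(δ) = 0, and l_k is a 0-hyperbolic length function on G: l_k(1)=0, l_k(g)=l_k(g⁻¹), l_k(gh) ≤ l_k(g)+l_k(h), and c_k(f,g) ≥ min{c_k(f,h), c_k(g,h)} for all f,g,h, where c_k(g,h) = (l_k(g)+l_k(h)−l_k(g⁻¹h))/2. -/
import Mathlib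


/-- The height of an element of ℤⁿ: the largest index (counted from 1) of a
nonzero coordinate, with ht 0 = 0. -/
def ht {n : ℕ} (a : Fin n → ℤ) : ℕ :=
  (Finset.univ.filter (fun i : Fin n => a i ≠ 0)).sup (fun i => i.1 + 1)

/-- The strict right lexicographic order on ℤⁿ: comparison is made at the
rightmost coordinate where the two elements differ. -/
def rlt {n : ℕ} (a b : Fin n → ℤ) : Prop :=
  ∃ k : Fin n, a k < b k ∧ ∀ j : Fin n, k < j → a j = b j

/-- The right lexicographic order on ℤⁿ. -/
def rle {n : ℕ} (a b : Fin n → ℤ) : Prop :=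
  a = b ∨ rlt a b

/-- Projection of ℤⁿ onto its n-k rightmost coordinates. -/
def proj (n k : ℕ) (h : k ≤ n) (a : Fin n → ℤ) : Fin (n - k) → ℤ :=
  fun i => a ⟨k + i.1, by omega⟩

lemma proj_mono {n k : ℕ} (hkn : k ≤ n) (a b : Fin n → ℤ) (h : rle a b) :
    rle (proj n k hkn a) (proj n k hkn b) := by
  rcases h with h | ⟨j, hlt, hrest⟩
  · exact Or.inl (by rw [h])
  by_cases hj : j.1 < k
  · left
    funext i
    exact hrest ⟨k + i.1, by omega⟩ (by simpa [Fin.lt_def] using by omega)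
  · right
    have hjn : j.1 - k < n - k := by omega
    refine ⟨⟨j.1 - k, hjn⟩, ?_, ?_⟩
    · have : (⟨k + (j.1 - k), by omega⟩ : Fin n) = j := by
        ext; simp; omega
      simpa [proj, this] using hlt
    · intro i hi
      exact hrest ⟨k + i.1, by omega⟩ (by simp [Fin.lt_def] at hi ⊢; omega)

lemma proj_add {n k : ℕ} (hkn : k ≤ n) (a b : Fin n → ℤ) :
    proj n k hkn (a + b) = proj n k hkn a + proj n k hkn b := rfl

lemma proj_delta {n k : ℕ} (hk1 : 1 ≤ k) (hkn : k ≤ n) (δ : Fin n → ℤ)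
    (hδ : ht δ = 1) : proj n k hkn δ = 0 := by
  funext i
  by_contra h
  have hmem : (⟨k + i.1, by omega⟩ : Fin n) ∈
      (Finset.univ.filter (fun i : Fin n => δ i ≠ 0)) := by
    simp only [Finset.mem_filter, Finset.mem_univ, true_and]
    exact h
  have := Finset.le_sup (f := fun i : Fin n => i.1 + 1) hmem
  rw [← ht, hδ] at this
  simp only at this
  omega

/-- If l : G → ℤⁿ is a δ-hyperbolic length function (right lex order) with
ht δ = 1, then for k ≥ 1 the projection π_k onto the n-k rightmost coordinates
is an order-preserving homomorphism killing δ, and l_k = π_k ∘ l is a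
0-hyperbolic length function.  Gromov products are doubled and the min
inequalities are expressed as disjunctions. -/
theorem stmt_12 {G : Type*} [Group G] (n k : ℕ) (hk1 : 1 ≤ k) (hkn : k ≤ n)
    (l : G → Fin n → ℤ) (δ : Fin n → ℤ)
    (hone : l 1 = 0)
    (hpos : ∀ g, rle 0 (l g))
    (hinv : ∀ g, l g = l g⁻¹)
    (hsub : ∀ g h, rle (l (g * h)) (l g + l h))
    (hδ : ht δ = 1)
    (hhyp : ∀ f g h : G,
      rle (l f + l h - l (f⁻¹ * h) - 2 • δ) (l f + l g - l (f⁻¹ * g)) ∨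
      rle (l g + l h - l (g⁻¹ * h) - 2 • δ) (l f + l g - l (f⁻¹ * g))) :
    (∀ a b : Fin n → ℤ, rle a b → rle (proj n k hkn a) (proj n k hkn b)) ∧
    (∀ a b : Fin n → ℤ, proj n k hkn (a + b) = proj n k hkn a + proj n k hkn b) ∧
    proj n k hkn δ = 0 ∧
    proj n k hkn (l 1) = 0 ∧
    (∀ g : G, proj n k hkn (l g) = proj n k hkn (l g⁻¹)) ∧
    (∀ g h : G, rle (proj n k hkn (l (g * h)))
        (proj n k hkn (l g) + proj n k hkn (l h))) ∧
    (∀ f g h : G,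
      rle (proj n k hkn (l f + l h - l (f⁻¹ * h)))
          (proj n k hkn (l f + l g - l (f⁻¹ * g))) ∨
      rle (proj n k hkn (l g + l h - l (g⁻¹ * h)))
          (proj n k hkn (l f + l g - l (f⁻¹ * g)))) := by
  have hd := proj_delta hk1 hkn δ hδ
  refine ⟨proj_mono hkn, proj_add hkn, hd, by rw [hone]; rfl,
    fun g => by rw [← hinv], fun g h => proj_mono hkn _ _ (hsub g h), ?_⟩
  intro f g h
  have key : ∀ x y : Fin n → ℤ, proj n k hkn (x - 2 • δ) = proj n k hkn x := by
    intro x y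
    funext i
    simp [proj, Pi.sub_apply]
    have : δ (⟨k + i.1, by omega⟩ : Fin n) = 0 := congrFun hd i
    simp [this]
  rcases hhyp f g h with h1 | h1
  · left
    have := proj_mono hkn _ _ h1
    rwa [key _ 0] at this
  · right
    have := proj_mono hkn _ _ h1
    rwa [key _ 0] at this
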